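/- Let ν be a measure on ℝ^d and α ∈ (0,2). Then ν satisfies ∫ (min(r,|z|))² ν(dz) ≤ C_U r^{2-α} for all r ∈ (0,1] (condition (U)) if and only if there exist constants C₀, C₁ > 0 such that ∫ min(|z|²,1) ν(dz) ≤ C₀ (condition (U0)) and ∫_{B_r(0)} |z|² ν(dz) ≤ C₁ r^{2-α} for all r ∈ (0,1) (condition (U1)). Moreover, one can take C₀ = C₁ = C_U in one direction, and C_U = (2^{2-α}/(1-2^{-α}) + 1)C₁ + 4C₀ in the other. -/

import Mathlib

/-!
Split `ν` into the ball `B_ρ`, `ρ = min r (1/2)`, where `min(r, |z|)² = |z|²`, and its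
complement, where `min(r, |z|)² ≤ r²`. On `B_ρ` one uses (U1); far away, `ν (B_{1/2}ᶜ) ≤ 4 C₀`
by Chebyshev and (U0). The annulus `B_{1/2} \ B_r` is cut into dyadic shells `B_{2x} \ B_x`,
each of mass at most `x⁻² ∫_{B_{2x}} |z|² ≤ 2^{2-α} C₁ x^{-α}` by (U1); over `x = 2ᵏ r` these
bounds form a geometric series of ratio `2^{-α}`, whence `ν (B_{1/2} \ B_r) ≲ r^{-α}`.
The converse direction is immediate, since `min(r, |z|) = |z|` on `B_r`.
-/

open MeasureTheory Metric

open scoped ENNReal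

lemma ENNReal.le_ofReal_div_of_ofReal_mul_le {m : ℝ≥0∞} {a b : ℝ} (ha : 0 < a)
    (h : ENNReal.ofReal a * m ≤ ENNReal.ofReal b) : m ≤ ENNReal.ofReal (b / a) := by
  rwa [ENNReal.ofReal_div_of_pos ha, ENNReal.le_div_iff_mul_le (by simp [ha]) (by simp), mul_comm]

lemma Real.two_mul_rpow_div_sq {x : ℝ} (hx : 0 < x) (β : ℝ) :
    (2 * x) ^ (2 - β) / x ^ 2 = 2 ^ (2 - β) * x ^ (-β) := by
  rw [Real.mul_rpow zero_le_two hx.le, mul_div_assoc, ← Real.rpow_natCast x 2,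
    ← Real.rpow_sub hx]
  norm_num

lemma MeasureTheory.mul_measure_le_setLIntegral {X : Type*} [MeasurableSpace X] {μ : Measure X}
    {A : Set X} (hA : MeasurableSet A) {f : X → ℝ≥0∞} {c : ℝ≥0∞} (h : ∀ x ∈ A, c ≤ f x) :
    c * μ A ≤ ∫⁻ x in A, f x ∂μ :=
  (setLIntegral_const A c).symm.trans_le (setLIntegral_mono' hA h)

variable {E : Type*} [SeminormedAddCommGroup E] [MeasurableSpace E]

def SatisfiesU (ν : Measure E) (α C : ℝ) : Prop :=
  ∀ r : ℝ, 0 < r → r ≤ 1 →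
    ∫⁻ z, ENNReal.ofReal ((min r ‖z‖) ^ 2) ∂ν ≤ ENNReal.ofReal (C * r ^ (2 - α))

def SatisfiesU0 (ν : Measure E) (C : ℝ) : Prop :=
  ∫⁻ z, ENNReal.ofReal (min (‖z‖ ^ 2) 1) ∂ν ≤ ENNReal.ofReal C

def SatisfiesU1 (ν : Measure E) (α C : ℝ) : Prop :=
  ∀ r : ℝ, 0 < r → r < 1 →
    ∫⁻ z in ball 0 r, ENNReal.ofReal (‖z‖ ^ 2) ∂ν ≤ ENNReal.ofReal (C * r ^ (2 - α))

variable [OpensMeasurableSpace E] {ν : Measure E}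

lemma setLIntegral_ball_norm_sq_le_lintegral_min_sq (r : ℝ) :
    ∫⁻ z in ball 0 r, ENNReal.ofReal (‖z‖ ^ 2) ∂ν ≤ ∫⁻ z, ENNReal.ofReal ((min r ‖z‖) ^ 2) ∂ν :=
  calc ∫⁻ z in ball 0 r, ENNReal.ofReal (‖z‖ ^ 2) ∂ν
      = ∫⁻ z in ball 0 r, ENNReal.ofReal ((min r ‖z‖) ^ 2) ∂ν :=
        setLIntegral_congr_fun measurableSet_ball fun z hz => by
          rw [min_eq_right (mem_ball_zero_iff.1 hz).le]
    _ ≤ _ := setLIntegral_le_lintegral _ _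

omit [MeasurableSpace E] [OpensMeasurableSpace E] in
lemma min_norm_sq_one_eq (z : E) : min (‖z‖ ^ 2) 1 = (min 1 ‖z‖) ^ 2 := by
  rw [pow_left_monotoneOn.map_min zero_le_one (norm_nonneg z), one_pow, min_comm]

lemma lintegral_min_sq_le_setLIntegral_add {ρ r : ℝ} (hρr : ρ ≤ r) :
    ∫⁻ z, ENNReal.ofReal ((min r ‖z‖) ^ 2) ∂ν ≤
      ∫⁻ z in ball 0 ρ, ENNReal.ofReal (‖z‖ ^ 2) ∂ν + ENNReal.ofReal (r ^ 2) * ν (ball 0 ρ)ᶜ := by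
  rw [← lintegral_add_compl _ measurableSet_ball, ← setLIntegral_const]
  refine add_le_add (setLIntegral_mono' measurableSet_ball fun z hz => ?_)
    (setLIntegral_mono' measurableSet_ball.compl fun z _ => ?_)
  · rw [min_eq_right ((mem_ball_zero_iff.1 hz).le.trans hρr)]
  · refine ENNReal.ofReal_le_ofReal ?_
    rcases le_total r ‖z‖ with h | h
    · rw [min_eq_left h]
    · rw [min_eq_right h]; exact pow_le_pow_left₀ (norm_nonneg z) h 2

lemma mul_measure_compl_ball_le_lintegral_min {s : ℝ} (hs0 : 0 ≤ s) (hs1 : s ≤ 1) :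
    ENNReal.ofReal (s ^ 2) * ν (ball 0 s)ᶜ ≤ ∫⁻ z, ENNReal.ofReal (min (‖z‖ ^ 2) 1) ∂ν := by
  refine (mul_measure_le_setLIntegral measurableSet_ball.compl fun z hz => ?_).trans
    (setLIntegral_le_lintegral _ _)
  have hsz : s ≤ ‖z‖ := by simpa using hz
  exact ENNReal.ofReal_le_ofReal (le_min (pow_le_pow_left₀ hs0 hsz 2) (pow_le_one₀ hs0 hs1))

section AnnulusBounds

variable {α C₁ R : ℝ}

lemma measure_annulus_le (hα2 : α ≤ 2) (hC₁ : 0 ≤ C₁) (hR0 : 0 < R) (hR1 : R < 1)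
    (hU1 : SatisfiesU1 ν α C₁) {x : ℝ} (hx : 0 < x) :
    ν (ball 0 (min (2 * x) R) \ ball 0 x) ≤ ENNReal.ofReal (2 ^ (2 - α) * C₁ * x ^ (-α)) := by
  have hs0 : 0 < min (2 * x) R := lt_min (by positivity) hR0
  have hmul : ENNReal.ofReal (x ^ 2) * ν (ball 0 (min (2 * x) R) \ ball 0 x) ≤
      ENNReal.ofReal (C₁ * (2 * x) ^ (2 - α)) :=
    calc ENNReal.ofReal (x ^ 2) * ν (ball 0 (min (2 * x) R) \ ball 0 x)
        ≤ ∫⁻ z in ball 0 (min (2 * x) R) \ ball 0 x, ENNReal.ofReal (‖z‖ ^ 2) ∂ν :=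
          mul_measure_le_setLIntegral (measurableSet_ball.diff measurableSet_ball) fun z hz =>
            ENNReal.ofReal_le_ofReal (pow_le_pow_left₀ hx.le (by simpa using hz.2) 2)
      _ ≤ ∫⁻ z in ball 0 (min (2 * x) R), ENNReal.ofReal (‖z‖ ^ 2) ∂ν :=
          lintegral_mono_set Set.sdiff_subset
      _ ≤ ENNReal.ofReal (C₁ * (min (2 * x) R) ^ (2 - α)) :=
          hU1 _ hs0 ((min_le_right _ _).trans_lt hR1)
      _ ≤ ENNReal.ofReal (C₁ * (2 * x) ^ (2 - α)) := by
          gcongr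
          exact min_le_left _ _
  calc ν (ball 0 (min (2 * x) R) \ ball 0 x)
      ≤ ENNReal.ofReal (C₁ * (2 * x) ^ (2 - α) / x ^ 2) :=
        ENNReal.le_ofReal_div_of_ofReal_mul_le (by positivity) hmul
    _ = ENNReal.ofReal (2 ^ (2 - α) * C₁ * x ^ (-α)) := by
        rw [mul_div_assoc, Real.two_mul_rpow_div_sq hx]; ring_nf

omit [MeasurableSpace E] [OpensMeasurableSpace E] in
lemma ball_diff_ball_subset_iUnion_annulus {ρ : ℝ} (hρ : 0 < ρ) :
    ball (0 : E) R \ ball 0 ρ ⊆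
      ⋃ k : ℕ, ball 0 (min (2 * (2 ^ k * ρ)) R) \ ball 0 (2 ^ k * ρ) := by
  rintro z ⟨hzR, hzρ⟩
  rw [mem_ball_zero_iff] at hzR
  have hρz : ρ ≤ ‖z‖ := by simpa using hzρ
  obtain ⟨k, hk, hk'⟩ := exists_nat_pow_near ((one_le_div hρ).2 hρz) one_lt_two
  rw [le_div_iff₀ hρ] at hk
  rw [div_lt_iff₀ hρ, pow_succ] at hk'
  refine Set.mem_iUnion.2 ⟨k, ?_, ?_⟩
  · rw [mem_ball_zero_iff, lt_min_iff]
    exact ⟨by linarith, hzR⟩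
  · simpa using hk

lemma measure_ball_diff_ball_le (hα0 : 0 < α) (hα2 : α ≤ 2) (hC₁ : 0 ≤ C₁) (hR0 : 0 < R)
    (hR1 : R < 1) (hU1 : SatisfiesU1 ν α C₁) {ρ : ℝ} (hρ : 0 < ρ) :
    ν (ball 0 R \ ball 0 ρ) ≤ ENNReal.ofReal (2 ^ (2 - α) / (1 - 2 ^ (-α)) * C₁ * ρ ^ (-α)) := by
  have hq0 : (0 : ℝ) ≤ 2 ^ (-α) := by positivity
  have hq1 : (2 : ℝ) ^ (-α) < 1 :=
    Real.rpow_lt_one_of_one_lt_of_neg one_lt_two (neg_neg_of_pos hα0)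
  have hannulus (k : ℕ) : ν (ball 0 (min (2 * (2 ^ k * ρ)) R) \ ball 0 (2 ^ k * ρ)) ≤
      ENNReal.ofReal (2 ^ (2 - α) * C₁ * ρ ^ (-α) * (2 ^ (-α)) ^ k) := by
    refine (measure_annulus_le hα2 hC₁ hR0 hR1 hU1 (by positivity)).trans_eq ?_
    rw [Real.mul_rpow (by positivity) hρ.le, ← Real.rpow_pow_comm zero_le_two]
    ring_nf
  calc ν (ball 0 R \ ball 0 ρ)
      ≤ ∑' k : ℕ, ν (ball 0 (min (2 * (2 ^ k * ρ)) R) \ ball 0 (2 ^ k * ρ)) :=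
        (measure_mono (ball_diff_ball_subset_iUnion_annulus hρ)).trans (measure_iUnion_le _)
    _ ≤ ∑' k : ℕ, ENNReal.ofReal (2 ^ (2 - α) * C₁ * ρ ^ (-α) * (2 ^ (-α)) ^ k) :=
        ENNReal.tsum_le_tsum hannulus
    _ = ENNReal.ofReal (2 ^ (2 - α) * C₁ * ρ ^ (-α) * (1 - 2 ^ (-α))⁻¹) := by
        rw [← ENNReal.ofReal_tsum_of_nonneg (fun k => by positivity)
          ((summable_geometric_of_lt_one hq0 hq1).mul_left _), tsum_mul_left,
          tsum_geometric_of_lt_one hq0 hq1]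
    _ = ENNReal.ofReal (2 ^ (2 - α) / (1 - 2 ^ (-α)) * C₁ * ρ ^ (-α)) := by ring_nf

end AnnulusBounds

variable {α C₀ C₁ : ℝ}

omit [OpensMeasurableSpace E] in
lemma SatisfiesU.satisfiesU0 (hU : SatisfiesU ν α C₀) : SatisfiesU0 ν C₀ := by
  simpa only [SatisfiesU0, min_norm_sq_one_eq, Real.one_rpow, mul_one] using hU 1 one_pos le_rfl

lemma SatisfiesU.satisfiesU1 (hU : SatisfiesU ν α C₁) : SatisfiesU1 ν α C₁ := fun r hr0 hr1 =>
  (setLIntegral_ball_norm_sq_le_lintegral_min_sq r).trans (hU r hr0 hr1.le)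

omit [MeasurableSpace E] [OpensMeasurableSpace E] in
lemma compl_ball_subset_ball_diff_ball_union {r : ℝ} :
    (ball (0 : E) (min r (1 / 2)))ᶜ ⊆ (ball 0 (1 / 2) \ ball 0 r) ∪ (ball 0 (1 / 2))ᶜ := by
  intro z hz
  simp only [Set.mem_compl_iff, mem_ball_zero_iff, not_lt, min_le_iff, Set.mem_union,
    Set.mem_sdiff] at hz ⊢
  by_cases h : ‖z‖ < 1 / 2
  · exact Or.inl ⟨h, hz.resolve_right (by linarith)⟩
  · exact Or.inr (not_lt.1 h)

lemma satisfiesU_of_satisfiesU0_of_satisfiesU1 (hα0 : 0 < α) (hα2 : α ≤ 2) (hC₀ : 0 ≤ C₀)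
    (hC₁ : 0 ≤ C₁) (hU0 : SatisfiesU0 ν C₀) (hU1 : SatisfiesU1 ν α C₁) :
    SatisfiesU ν α ((2 ^ (2 - α) / (1 - 2 ^ (-α)) + 1) * C₁ + 4 * C₀) := by
  intro r hr0 hr1
  set K : ℝ := 2 ^ (2 - α) / (1 - 2 ^ (-α))
  have hK : 0 ≤ K := div_nonneg (by positivity)
    (sub_nonneg.2 (Real.rpow_le_one_of_one_le_of_nonpos one_le_two (by linarith)))
  have hρ0 : 0 < min r (1 / 2) := lt_min hr0 one_half_pos
  have hnear : ∫⁻ z in ball 0 (min r (1 / 2)), ENNReal.ofReal (‖z‖ ^ 2) ∂ν ≤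
      ENNReal.ofReal (C₁ * r ^ (2 - α)) := by
    refine (hU1 _ hρ0 ((min_le_right _ _).trans_lt one_half_lt_one)).trans ?_
    gcongr
    exact min_le_left _ _
  have hmid : ν (ball 0 (1 / 2) \ ball 0 r) ≤ ENNReal.ofReal (K * C₁ * r ^ (-α)) :=
    measure_ball_diff_ball_le hα0 hα2 hC₁ one_half_pos one_half_lt_one hU1 hr0
  have hfar : ν (ball 0 (1 / 2))ᶜ ≤ ENNReal.ofReal (4 * C₀) := by
    have hcheb := (mul_measure_compl_ball_le_lintegral_min (ν := ν) (s := 1 / 2)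
      (by norm_num) (by norm_num)).trans hU0
    convert ENNReal.le_ofReal_div_of_ofReal_mul_le (by norm_num) hcheb using 2
    ring
  have hr2 : r ^ 2 ≤ r ^ (2 - α) := by
    rw [← Real.rpow_two]
    exact Real.rpow_le_rpow_of_exponent_ge hr0 hr1 (by linarith)
  have hrr : r ^ 2 * r ^ (-α) = r ^ (2 - α) := by
    rw [← Real.rpow_two, ← Real.rpow_add hr0, sub_eq_add_neg]
  calc ∫⁻ z, ENNReal.ofReal ((min r ‖z‖) ^ 2) ∂ν
      ≤ ∫⁻ z in ball 0 (min r (1 / 2)), ENNReal.ofReal (‖z‖ ^ 2) ∂ν +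
          ENNReal.ofReal (r ^ 2) * ν (ball 0 (min r (1 / 2)))ᶜ :=
        lintegral_min_sq_le_setLIntegral_add (min_le_left _ _)
    _ ≤ ENNReal.ofReal (C₁ * r ^ (2 - α)) + ENNReal.ofReal (r ^ 2) *
          (ENNReal.ofReal (K * C₁ * r ^ (-α)) + ENNReal.ofReal (4 * C₀)) := by
        gcongr
        exact (measure_mono compl_ball_subset_ball_diff_ball_union).trans
          ((measure_union_le _ _).trans (add_le_add hmid hfar))
    _ = ENNReal.ofReal (C₁ * r ^ (2 - α) + r ^ 2 * (K * C₁ * r ^ (-α) + 4 * C₀)) := by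
        rw [← ENNReal.ofReal_add (by positivity) (by positivity),
          ← ENNReal.ofReal_mul (by positivity),
          ← ENNReal.ofReal_add (by positivity) (by positivity)]
    _ ≤ ENNReal.ofReal (((K + 1) * C₁ + 4 * C₀) * r ^ (2 - α)) := by
        have hexpand : r ^ 2 * (K * C₁ * r ^ (-α) + 4 * C₀) =
            K * C₁ * r ^ (2 - α) + 4 * C₀ * r ^ 2 := by
          rw [← hrr]; ring
        rw [hexpand]
        gcongr
        linarith [mul_le_mul_of_nonneg_left hr2 hC₀]

theorem stmt_3 {d : ℕ} (ν : Measure (EuclideanSpace ℝ (Fin d))) (α : ℝ)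
    (hα : α ∈ Set.Ioo (0 : ℝ) 2) :
    ((∃ C_U > (0 : ℝ), ∀ r : ℝ, 0 < r → r ≤ 1 →
        ∫⁻ z, ENNReal.ofReal ((min r ‖z‖) ^ 2) ∂ν ≤ ENNReal.ofReal (C_U * r ^ (2 - α))) ↔
      (∃ C₀ > (0 : ℝ), ∃ C₁ > (0 : ℝ),
        (∫⁻ z, ENNReal.ofReal (min (‖z‖ ^ 2) 1) ∂ν ≤ ENNReal.ofReal C₀) ∧
        (∀ r : ℝ, 0 < r → r < 1 →
          ∫⁻ z in ball (0 : EuclideanSpace ℝ (Fin d)) r, ENNReal.ofReal (‖z‖ ^ 2) ∂ν ≤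
            ENNReal.ofReal (C₁ * r ^ (2 - α))))) ∧
    (∀ C_U : ℝ, 0 < C_U →
      (∀ r : ℝ, 0 < r → r ≤ 1 →
        ∫⁻ z, ENNReal.ofReal ((min r ‖z‖) ^ 2) ∂ν ≤ ENNReal.ofReal (C_U * r ^ (2 - α))) →
      ((∫⁻ z, ENNReal.ofReal (min (‖z‖ ^ 2) 1) ∂ν ≤ ENNReal.ofReal C_U) ∧
        (∀ r : ℝ, 0 < r → r < 1 →
          ∫⁻ z in ball (0 : EuclideanSpace ℝ (Fin d)) r, ENNReal.ofReal (‖z‖ ^ 2) ∂ν ≤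
            ENNReal.ofReal (C_U * r ^ (2 - α))))) ∧
    (∀ C₀ C₁ : ℝ, 0 < C₀ → 0 < C₁ →
      (∫⁻ z, ENNReal.ofReal (min (‖z‖ ^ 2) 1) ∂ν ≤ ENNReal.ofReal C₀) →
      (∀ r : ℝ, 0 < r → r < 1 →
        ∫⁻ z in ball (0 : EuclideanSpace ℝ (Fin d)) r, ENNReal.ofReal (‖z‖ ^ 2) ∂ν ≤
          ENNReal.ofReal (C₁ * r ^ (2 - α))) →
      (∀ r : ℝ, 0 < r → r ≤ 1 →
        ∫⁻ z, ENNReal.ofReal ((min r ‖z‖) ^ 2) ∂ν ≤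
          ENNReal.ofReal (((2 ^ (2 - α) / (1 - 2 ^ (-α)) + 1) * C₁ + 4 * C₀) *
            r ^ (2 - α)))) := by
  obtain ⟨hα0, hα2⟩ := hα
  have hK : (0 : ℝ) < 2 ^ (2 - α) / (1 - 2 ^ (-α)) := div_pos (by positivity)
    (sub_pos.2 (Real.rpow_lt_one_of_one_lt_of_neg one_lt_two (by linarith)))
  have forward (C : ℝ) (hU : SatisfiesU ν α C) : SatisfiesU0 ν C ∧ SatisfiesU1 ν α C :=
    ⟨hU.satisfiesU0, hU.satisfiesU1⟩
  have backward (C₀ C₁ : ℝ) (h₀ : 0 < C₀) (h₁ : 0 < C₁) :=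
    satisfiesU_of_satisfiesU0_of_satisfiesU1 (ν := ν) hα0 hα2.le h₀.le h₁.le
  refine ⟨⟨fun ⟨C, hC, hU⟩ => ⟨C, hC, C, hC, forward C hU⟩, fun ⟨C₀, h₀, C₁, h₁, hU0, hU1⟩ =>
    ⟨_, add_pos (mul_pos (by linarith) h₁) (by linarith), backward C₀ C₁ h₀ h₁ hU0 hU1⟩⟩,
    fun C _ => forward C, backward⟩
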